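/- Up to rotational symmetry of the pentagon and ℤ-basis change, every fan-giving complete non-singular characteristic map of dimension 2 on the boundary of a pentagon (vertices 1,…,5 cyclically) is given by the matrix λ_d with columns (1,0), (0,1), (−1,1), (−1,0), (d,−1) for some d ∈ ℤ. In particular, if a 2×5 integer matrix λ = ((1,0),(0,1),(−1,a),(b,c),(d,−1)) satisfies det(λᵢ, λ_{i+1}) = 1 for all adjacent pairs i, i+1 (mod 5), is positively oriented, and fan-giving, then after the allowed symmetries it equals λ_d for some d. -/
import Mathlib


/-- Cast an integral vector in `ℤ²` to `ℝ²`. -/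
def toR (u : ℤ × ℤ) : ℝ × ℝ := ((u.1 : ℝ), (u.2 : ℝ))

/-- The ray spanned by an integral vector. -/
def rayOf (u : ℤ × ℤ) : Set (ℝ × ℝ) := {x | ∃ s : ℝ, 0 ≤ s ∧ x = s • toR u}

/-- The two-dimensional cone positively spanned by two integral vectors. -/
def coneOf (u v : ℤ × ℤ) : Set (ℝ × ℝ) :=
  {x | ∃ s t : ℝ, 0 ≤ s ∧ 0 ≤ t ∧ x = s • toR u + t • toR v}

/-- The determinant of the `2 × 2` integer matrix with columns `u`, `v`. -/
def det2 (u v : ℤ × ℤ) : ℤ := u.1 * v.2 - u.2 * v.1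

/-- `lam` is fan-giving on the boundary of the pentagon (the 5-cycle on `ℤ₅`): the cones
`pos{lam i, lam (i+1)}`, together with their faces, form a complete fan in `ℝ²`: they
cover `ℝ²` and pairwise intersections are common faces. -/
def IsFanGiving5 (lam : ZMod 5 → ℤ × ℤ) : Prop :=
  (⋃ i : ZMod 5, coneOf (lam i) (lam (i + 1))) = Set.univ ∧
  ∀ i j : ZMod 5,
    (coneOf (lam i) (lam (i + 1)) ∩ coneOf (lam j) (lam (j + 1)) ∈
      ({{0}, rayOf (lam i), rayOf (lam (i + 1)), coneOf (lam i) (lam (i + 1))} :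
        Set (Set (ℝ × ℝ)))) ∧
    (coneOf (lam i) (lam (i + 1)) ∩ coneOf (lam j) (lam (j + 1)) ∈
      ({{0}, rayOf (lam j), rayOf (lam (j + 1)), coneOf (lam j) (lam (j + 1))} :
        Set (Set (ℝ × ℝ))))

/-- The normal form `λ_d`, with columns `(1,0), (0,1), (−1,1), (−1,0), (d,−1)` at the
vertices `1, …, 5` of the pentagon. -/
def pentagonChar (d : ℤ) : ZMod 5 → ℤ × ℤ := fun i =>
  if i = 0 then (1, 0)
  else if i = 1 then (0, 1)
  else if i = 2 then (-1, 1)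
  else if i = 3 then (-1, 0)
  else (d, -1)

section Helpers

lemma z5a (j : ZMod 5) : j + 2 + 3 = j := by
  rw [add_assoc, show ((2:ZMod 5)+3 = 0) from by decide, add_zero]
lemma z5b (j : ZMod 5) : j + 2 + 1 = j + 3 := by rw [add_assoc]; norm_num
lemma z5c (j : ZMod 5) : j + 1 + 1 = j + 2 := by rw [add_assoc]; norm_num
lemma z5d (j : ZMod 5) : j + 1 + 2 = j + 3 := by rw [add_assoc]; norm_num
lemma z5e (j : ZMod 5) : j + 3 + 2 = j := by
  rw [add_assoc, show ((3:ZMod 5)+2 = 0) from by decide, add_zero]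
lemma z5f (j : ZMod 5) : j + 2 + 2 = j + 4 := by rw [add_assoc]; norm_num
lemma z5g (j : ZMod 5) : j + 3 + 1 = j + 4 := by rw [add_assoc]; norm_num
lemma z5h (j : ZMod 5) : j + 3 + 3 = j + 1 := by
  rw [add_assoc, show ((3:ZMod 5)+3 = 1) from by decide]
lemma z5i (j : ZMod 5) : j + 3 + 4 = j + 2 := by
  rw [add_assoc, show ((3:ZMod 5)+4 = 2) from by decide]
lemma z5k (j : ZMod 5) : j + 4 + 2 = j + 1 := by
  rw [add_assoc, show ((4:ZMod 5)+2 = 1) from by decide]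
lemma z5l (j : ZMod 5) : j + 4 + 3 = j + 2 := by
  rw [add_assoc, show ((4:ZMod 5)+3 = 2) from by decide]

lemma cramer (u v w : ℤ × ℤ) (h : det2 u v = 1) :
    w = (det2 w v) • u + (det2 u w) • v := by
  unfold det2 at h ⊢
  have h1 : w.1 = (w.1 * v.2 - w.2 * v.1) * u.1 + (u.1 * w.2 - u.2 * w.1) * v.1 := by
    linear_combination (-w.1) * h
  have h2 : w.2 = (w.1 * v.2 - w.2 * v.1) * u.2 + (u.1 * w.2 - u.2 * w.1) * v.2 := by
    linear_combination (-w.2) * h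
  exact Prod.ext h1 h2

lemma det2_skew (u v : ℤ × ℤ) : det2 u v = - det2 v u := by unfold det2; ring

/-- The basic recursion: each `lam (i+2)` is an integer combination of the previous two. -/
lemma recA (lam : ZMod 5 → ℤ × ℤ) (hpos : ∀ i : ZMod 5, det2 (lam i) (lam (i + 1)) = 1)
    (i : ZMod 5) :
    lam (i + 2) = (det2 (lam i) (lam (i + 2))) • lam (i + 1) - lam i := by
  have h := cramer (lam i) (lam (i+1)) (lam (i+2)) (hpos i)
  have h2 : det2 (lam (i+2)) (lam (i+1)) = -1 := by
    rw [det2_skew]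
    have := hpos (i+1); rw [z5c] at this; rw [this]
  rw [h2] at h
  conv_lhs => rw [h]
  module

lemma det2_aux (u v : ℤ × ℤ) (p q : ℤ) (h : det2 u v = 1) :
    det2 (q • (p • v - u) - v) u = 1 - p * q := by
  unfold det2 at *
  simp only [Prod.fst_sub, Prod.snd_sub, Prod.smul_fst, Prod.smul_snd, smul_eq_mul]
  linear_combination (1 - p * q) * h

/-- The cyclic relation on the "rotation numbers". -/
lemma recB (lam : ZMod 5 → ℤ × ℤ) (hpos : ∀ i : ZMod 5, det2 (lam i) (lam (i + 1)) = 1)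
    (i : ZMod 5) :
    det2 (lam (i+3)) (lam i) = 1 - det2 (lam i) (lam (i+2)) * det2 (lam (i+1)) (lam (i+3)) := by
  set p := det2 (lam i) (lam (i+2)) with hp
  set q := det2 (lam (i+1)) (lam (i+3)) with hq
  have e2 := recA lam hpos i
  have e3 := recA lam hpos (i+1)
  rw [z5d, z5c] at e3
  rw [← hq] at e3
  rw [e2, ← hp] at e3
  rw [e3]
  exact det2_aux _ _ _ _ (hpos i)

/-- Purely arithmetic classification of the cyclic sequences of rotation numbers. -/
lemma key_arith (c : ZMod 5 → ℤ) (hR : ∀ i, c (i + 3) = 1 - c i * c (i + 1)) :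
    (∃ i, c i = 1 ∧ c (i + 1) = 1) ∨
    (∃ i, c i = -1 ∧ c (i + 1) = -3 ∧ c (i + 2) = -1 ∧ c (i + 3) = -2 ∧ c (i + 4) = -2) := by
  have hP : ∀ j, c (j + 2) * c (j + 3) = 1 - c j := by
    intro j
    have h := hR (j + 2)
    rw [z5a, z5b] at h
    linarith
  by_cases h11 : ∃ i, c i = 1 ∧ c (i + 1) = 1
  · exact Or.inl h11
  push_neg at h11
  right
  have h0 : ∀ j, c j ≠ 0 := by
    intro j hj
    have ha := hP j
    have hb := hP (j + 2)
    rw [z5f, z5a] at hb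
    rw [hj] at ha hb
    rw [mul_zero] at hb
    have hc2 : c (j + 2) = 1 := by linarith
    rw [hc2, one_mul] at ha
    have hc3 : c (j + 3) = 1 := by linarith
    exact h11 (j + 2) hc2 (by rw [z5b]; exact hc3)
  have h1 : ∀ j, c j ≠ 1 := by
    intro j hj
    have ha := hP j
    rw [hj] at ha
    rcases mul_eq_zero.mp (by linarith : c (j + 2) * c (j + 3) = 0) with h | h
    exacts [h0 _ h, h0 _ h]
  have hex : ∃ j, c j = -1 := by
    by_contra hno
    push_neg at hno
    have h2 : ∀ j, 2 ≤ (c j).natAbs := by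
      intro j
      have := h0 j; have := h1 j; have := hno j
      omega
    have grow : ∀ n : ℕ, ∀ j, n + 2 ≤ (c j).natAbs := by
      intro n
      induction n with
      | zero => simpa using h2
      | succ n ih =>
        intro j
        have hPj := hP j
        have habs : (c (j+2)).natAbs * (c (j+3)).natAbs = (1 - c j).natAbs := by
          rw [← Int.natAbs_mul, hPj]
        have hb1 : (n + 2) * (n + 2) ≤ (1 - c j).natAbs := by
          rw [← habs]; exact Nat.mul_le_mul (ih _) (ih _)
        have hb2 : (1 - c j).natAbs ≤ 1 + (c j).natAbs := by omega
        nlinarith [hb1, hb2]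
    have := grow ((c 0).natAbs) 0
    omega
  obtain ⟨j, hj⟩ := hex
  have hPj := hP j
  rw [hj] at hPj
  have hprod : c (j + 2) * c (j + 3) = 2 := by linarith
  have hdvd : (c (j+2)).natAbs ∣ 2 := by
    have : (c (j+2)).natAbs * (c (j+3)).natAbs = 2 := by
      rw [← Int.natAbs_mul, hprod]; rfl
    exact ⟨_, this.symm⟩
  have hle : (c (j+2)).natAbs ≤ 2 := Nat.le_of_dvd (by norm_num) hdvd
  have hvals : c (j+2) = -1 ∨ c (j+2) = -2 ∨ c (j+2) = 2 := by
    have := h0 (j+2); have := h1 (j+2)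
    omega
  rcases hvals with hc2 | hc2 | hc2
  · -- c (j+2) = -1, c (j+3) = -2
    have hc3 : c (j + 3) = -2 := by rw [hc2] at hprod; omega
    have hb := hP (j + 2)
    rw [z5f, z5a, hc2, hj] at hb
    have hc4 : c (j + 4) = -2 := by omega
    have hcc := hP (j + 3)
    rw [z5e, z5h, hc3, hj] at hcc
    have hc1 : c (j + 1) = -3 := by omega
    exact ⟨j, hj, hc1, hc2, hc3, hc4⟩
  · -- c (j+2) = -2, c (j+3) = -1
    have hc3 : c (j + 3) = -1 := by rw [hc2] at hprod; omega
    have hcc := hP (j + 3)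
    rw [z5e, z5h, hc3, hj] at hcc
    have hc1 : c (j + 1) = -2 := by omega
    have hd := hP (j + 4)
    rw [z5k, z5l, hc1, hc2] at hd
    have hc4 : c (j + 4) = -3 := by omega
    refine ⟨j + 3, hc3, ?_, ?_, ?_, ?_⟩
    · rw [z5g]; exact hc4
    · rw [z5e]; exact hj
    · rw [z5h]; exact hc1
    · rw [z5i]; exact hc2
  · exfalso
    rw [hc2] at hprod
    exact h1 (j+3) (by omega)

/-- The change-of-basis linear map determined by a unimodular pair. -/
def gmap (u v : ℤ × ℤ) : (ℤ × ℤ) →ₗ[ℤ] (ℤ × ℤ) where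
  toFun x := (det2 x v, det2 u x)
  map_add' x y := by
    simp only [det2, Prod.fst_add, Prod.snd_add, Prod.mk_add_mk]
    exact Prod.ext (by ring) (by ring)
  map_smul' a x := by
    simp only [det2, Prod.smul_fst, Prod.smul_snd, smul_eq_mul, RingHom.id_apply,
      Prod.smul_mk]
    exact Prod.ext (by ring) (by ring)

def gmapInv (u v : ℤ × ℤ) : (ℤ × ℤ) →ₗ[ℤ] (ℤ × ℤ) where
  toFun p := p.1 • u + p.2 • v
  map_add' x y := by
    simp only [Prod.fst_add, Prod.snd_add]
    module
  map_smul' a x := by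
    simp only [Prod.smul_fst, Prod.smul_snd, RingHom.id_apply, smul_eq_mul]
    module

/-- The change-of-basis `ℤ`-linear equivalence determined by a unimodular pair. -/
def gEquiv (u v : ℤ × ℤ) (h : det2 u v = 1) : (ℤ × ℤ) ≃ₗ[ℤ] (ℤ × ℤ) :=
  { gmap u v with
    invFun := gmapInv u v
    left_inv := by
      intro x
      show (det2 x v) • u + (det2 u x) • v = x
      unfold det2 at h ⊢
      apply Prod.ext
      · simp only [Prod.fst_add, Prod.smul_fst, smul_eq_mul]
        linear_combination x.1 * h
      · simp only [Prod.snd_add, Prod.smul_snd, smul_eq_mul]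
        linear_combination x.2 * h
    right_inv := by
      intro p
      show (det2 (p.1 • u + p.2 • v) v, det2 u (p.1 • u + p.2 • v)) = p
      unfold det2 at h ⊢
      apply Prod.ext
      · simp only [Prod.fst_add, Prod.snd_add, Prod.smul_fst, Prod.smul_snd, smul_eq_mul]
        linear_combination p.1 * h
      · simp only [Prod.fst_add, Prod.snd_add, Prod.smul_fst, Prod.smul_snd, smul_eq_mul]
        linear_combination p.2 * h }

lemma gEquiv_apply (u v : ℤ × ℤ) (h : det2 u v = 1) (x : ℤ × ℤ) :
    gEquiv u v h x = (det2 x v, det2 u x) := rfl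

lemma gEquiv_u (u v : ℤ × ℤ) (h : det2 u v = 1) : gEquiv u v h u = (1, 0) := by
  rw [gEquiv_apply, h]
  have : det2 u u = 0 := by unfold det2; ring
  rw [this]

lemma gEquiv_v (u v : ℤ × ℤ) (h : det2 u v = 1) : gEquiv u v h v = (0, 1) := by
  rw [gEquiv_apply]
  have h0 : det2 v v = 0 := by unfold det2; ring
  rw [h0, h]

end Helpers

/-- Up to rotational symmetry of the pentagon and `ℤ`-basis change, every fan-giving
complete non-singular positively-oriented characteristic map of dimension `2` on the
boundary of the pentagon (i.e. `det(λᵢ, λ_{i+1}) = 1` for all adjacent pairs, and the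
corresponding cones form a complete fan) is the map `λ_d` for some `d ∈ ℤ`. -/
theorem pentagon_charMap_classification (lam : ZMod 5 → ℤ × ℤ)
    (hpos : ∀ i : ZMod 5, det2 (lam i) (lam (i + 1)) = 1)
    (hfan : IsFanGiving5 lam) :
    ∃ (d : ℤ) (r : ZMod 5) (g : (ℤ × ℤ) ≃ₗ[ℤ] (ℤ × ℤ)),
      ∀ i : ZMod 5, g (lam (i + r)) = pentagonChar d i := by
  have hR : ∀ i : ZMod 5,
      (fun i => det2 (lam i) (lam (i + 2))) (i + 3)
        = 1 - (fun i => det2 (lam i) (lam (i + 2))) i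
            * (fun i => det2 (lam i) (lam (i + 2))) (i + 1) := by
    intro i
    show det2 (lam (i+3)) (lam (i+3+2))
        = 1 - det2 (lam i) (lam (i+2)) * det2 (lam (i+1)) (lam (i+1+2))
    rw [z5e, z5d]
    exact recB lam hpos i
  rcases key_arith (fun i => det2 (lam i) (lam (i + 2))) hR with ⟨r, hr0, hr1⟩ | ⟨j, b0, b1, _⟩
  · -- good case
    rw [z5d] at hr1
    refine ⟨1 - det2 (lam (r+2)) (lam (r+4)), r, gEquiv (lam r) (lam (r+1)) (hpos r), ?_⟩
    set g := gEquiv (lam r) (lam (r+1)) (hpos r) with hg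
    have g0 : g (lam r) = (1, 0) := gEquiv_u _ _ _
    have g1 : g (lam (r+1)) = (0, 1) := gEquiv_v _ _ _
    have e2 := recA lam hpos r
    rw [hr0] at e2
    have g2 : g (lam (r+2)) = (-1, 1) := by
      rw [e2, map_sub, map_smul, g0, g1]
      decide
    have e3 := recA lam hpos (r+1)
    rw [z5d, z5c, hr1] at e3
    have g3 : g (lam (r+3)) = (-1, 0) := by
      rw [e3, map_sub, map_smul, g1, g2]
      decide
    have e4 := recA lam hpos (r+2)
    rw [z5f, z5b] at e4
    have g4 : g (lam (r+4)) = (1 - det2 (lam (r+2)) (lam (r+4)), -1) := by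
      conv_lhs => rw [e4]
      rw [map_sub, map_smul, g2, g3]
      apply Prod.ext
      · simp only [Prod.fst_sub, Prod.smul_fst, smul_eq_mul]
        ring
      · simp only [Prod.snd_sub, Prod.smul_snd, smul_eq_mul]
        ring
    intro i
    have hi : i = 0 ∨ i = 1 ∨ i = 2 ∨ i = 3 ∨ i = 4 := by revert i; decide
    rcases hi with rfl | rfl | rfl | rfl | rfl
    · rw [zero_add, g0]; rfl
    · rw [add_comm, g1]; rfl
    · rw [add_comm, g2]; rfl
    · rw [add_comm, g3]; rfl
    · rw [add_comm, g4]; rfl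
  · -- bad case : contradiction with the fan condition
    exfalso
    rw [z5d] at b1
    have h := hpos j
    have e2 := recA lam hpos j
    rw [b0] at e2
    have E2 : lam (j+2) = -(lam j) - lam (j+1) := by rw [e2]; module
    have e3 := recA lam hpos (j+1)
    rw [z5d, z5c, b1, E2] at e3
    have E3 : lam (j+3) = (3:ℤ) • lam j + (2:ℤ) • lam (j+1) := by rw [e3]; module
    have c21 : (lam (j+2)).1 = -(lam j).1 - (lam (j+1)).1 := by rw [E2]; simp
    have c22 : (lam (j+2)).2 = -(lam j).2 - (lam (j+1)).2 := by rw [E2]; simp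
    have c31 : (lam (j+3)).1 = 3 * (lam j).1 + 2 * (lam (j+1)).1 := by
      rw [E3]; simp [smul_eq_mul]
    have c32 : (lam (j+3)).2 = 3 * (lam j).2 + 2 * (lam (j+1)).2 := by
      rw [E3]; simp [smul_eq_mul]
    unfold det2 at h
    have hdR : ((lam j).1 : ℝ) * ((lam (j+1)).2 : ℝ)
        - ((lam j).2 : ℝ) * ((lam (j+1)).1 : ℝ) = 1 := by exact_mod_cast h
    set a := ((lam j).1 : ℝ); set b := ((lam j).2 : ℝ)
    set p := ((lam (j+1)).1 : ℝ); set q := ((lam (j+1)).2 : ℝ)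
    have t31 : ((lam (j+3)).1 : ℝ) = 3 * a + 2 * p := by rw [c31]; push_cast; ring
    have t32 : ((lam (j+3)).2 : ℝ) = 3 * b + 2 * q := by rw [c32]; push_cast; ring
    have t21 : ((lam (j+2)).1 : ℝ) = -a - p := by rw [c21]; push_cast; ring
    have t22 : ((lam (j+2)).2 : ℝ) = -b - q := by rw [c22]; push_cast; ring
    have m1 : toR (lam (j+3)) ∈ coneOf (lam j) (lam (j+1)) := by
      refine ⟨3, 2, by norm_num, by norm_num, ?_⟩
      apply Prod.ext
      · show ((lam (j+3)).1 : ℝ) = ((3:ℝ) • toR (lam j) + (2:ℝ) • toR (lam (j+1))).1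
        simp only [Prod.fst_add, Prod.smul_fst, smul_eq_mul, toR]
        rw [t31]
      · show ((lam (j+3)).2 : ℝ) = ((3:ℝ) • toR (lam j) + (2:ℝ) • toR (lam (j+1))).2
        simp only [Prod.snd_add, Prod.smul_snd, smul_eq_mul, toR]
        rw [t32]
    have m2 : toR (lam (j+3)) ∈ coneOf (lam (j+2)) (lam (j+3)) :=
      ⟨0, 1, le_refl 0, zero_le_one, by simp⟩
    have hsub := (hfan.2 j (j+2)).1
    rw [z5b] at hsub
    simp only [Set.mem_insert_iff, Set.mem_singleton_iff] at hsub
    have mret : toR (lam (j+3)) ∈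
        coneOf (lam j) (lam (j+1)) ∩ coneOf (lam (j+2)) (lam (j+3)) := ⟨m1, m2⟩
    rcases hsub with hS | hS | hS | hS
    · -- intersection = {0}
      rw [hS] at mret
      have h0' : toR (lam (j+3)) = 0 := mret
      have f1 : ((lam (j+3)).1 : ℝ) = 0 := congrArg Prod.fst h0'
      have f2 : ((lam (j+3)).2 : ℝ) = 0 := congrArg Prod.snd h0'
      rw [t31] at f1; rw [t32] at f2
      have : (2:ℝ) = 0 := by linear_combination (-2)*hdR - b*f1 + a*f2
      norm_num at this
    · -- intersection = ray of lam j
      rw [hS] at mret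
      obtain ⟨s, _, heq⟩ := mret
      have f1 : ((lam (j+3)).1 : ℝ) = s * a := congrArg Prod.fst heq
      have f2 : ((lam (j+3)).2 : ℝ) = s * b := congrArg Prod.snd heq
      rw [t31] at f1; rw [t32] at f2
      have : (2:ℝ) = 0 := by linear_combination (-2)*hdR - b*f1 + a*f2
      norm_num at this
    · -- intersection = ray of lam (j+1)
      rw [hS] at mret
      obtain ⟨s, _, heq⟩ := mret
      have f1 : ((lam (j+3)).1 : ℝ) = s * p := congrArg Prod.fst heq
      have f2 : ((lam (j+3)).2 : ℝ) = s * q := congrArg Prod.snd heq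
      rw [t31] at f1; rw [t32] at f2
      have : (3:ℝ) = 0 := by linear_combination q*f1 - p*f2 - 3*hdR
      norm_num at this
    · -- intersection = coneOf (lam j) (lam (j+1))
      have hvmem : toR (lam (j+1)) ∈ coneOf (lam j) (lam (j+1)) :=
        ⟨0, 1, le_refl 0, zero_le_one, by simp⟩
      rw [← hS] at hvmem
      obtain ⟨s, t, hs, ht, heq⟩ := hvmem.2
      have f1 : p = s * ((lam (j+2)).1 : ℝ) + t * ((lam (j+3)).1 : ℝ) :=
        congrArg Prod.fst heq
      have f2 : q = s * ((lam (j+2)).2 : ℝ) + t * ((lam (j+3)).2 : ℝ) :=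
        congrArg Prod.snd heq
      rw [t21, t31] at f1; rw [t22, t32] at f2
      have e1 : s = 3*t := by linear_combination q*f1 - p*f2 + (-s+3*t)*hdR
      have e2' : s - 2*t = -1 := by linear_combination (-b)*f1 + a*f2 - (1+s-2*t)*hdR
      linarith
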